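/- (Theorem 5) Let 0 < α < β, M ≥ 1, and r_i = ((β−α)/2)cos((2i−1)π/(2M)) + (β+α)/2 for i = 1, …, M. Let L be an N×N real symmetric positive semidefinite matrix whose kernel is spanned by the all-ones vector 1⃗ and whose nonzero eigenvalues λ₂ ≤ … ≤ λ_N all lie in [α, β]. Then the M-periodic gain sequence ε*(k+jM) = 1/r_{k+1} (k = 0, …, M−1, j ≥ 0) drives ∏_{k=0}^{T−1}(I − ε*(k)L) to (1/N)·1⃗1⃗ᵀ as T → ∞, and its per-period convergence rate satisfies ρ_M = max_{2 ≤ i ≤ N} |∏_{k=1}^{M}(1 − λᵢ/r_k)| ≤ γ*_M := 1/|g_M(0)| < 1, where g_M(0) = T_M(−(β+α)/(β−α)). -/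

import Mathlib

open Matrix Finset Filter Polynomial

/-- The product `∏_{k=0}^{T-1} (I - ε(k) L)`, built recursively as
`P 0 = I`, `P (T+1) = (I - ε(T) L) * P T`. -/
noncomputable def consProd {N : ℕ} (L : Matrix (Fin N) (Fin N) ℝ) (ε : ℕ → ℝ) :
    ℕ → Matrix (Fin N) (Fin N) ℝ
  | 0 => 1
  | T + 1 => (1 - ε T • L) * consProd L ε T

/-!
Every factor `I - ε(k) L` is diagonal in the orthonormal eigenbasis `v`, so `∏_{k<T} (I - ε(k) L)`
is the sum of the projections `v_i v_iᵀ` weighted by the scalar products `∏_{k<T} (1 - ε(k) λᵢ)`.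
For `λ₁ = 0` the weight is `1` and `v₁ v₁ᵀ = 𝟙𝟙ᵀ / N`. For `λᵢ ∈ [α, β]`, the affine map sending
`[α, β]` onto `[-1, 1]` turns the Chebyshev points `r_k` into the roots of `T_M`, so
`∏_k (1 - λ / r_k) = T_M(x(λ)) / T_M(x(0))`; the numerator is at most `1` in absolute value and the
denominator, evaluated outside `[-1, 1]`, exceeds `1`. Hence each period contracts the weight
by at most `γ*_M < 1`, and periodicity makes the weight tend to `0`.
-/

open Real Polynomial.Chebyshev

namespace Polynomial.Chebyshev

theorem eval_T_real_eq_prod (n : ℕ) (x : ℝ) :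
    (T ℝ n).eval x = 2 ^ (n - 1) * ∏ k ∈ range n, (x - cos ((2 * k + 1) * π / (2 * n))) := by
  have hinj : Set.InjOn (fun k : ℕ ↦ cos ((2 * k + 1) * π / (2 * n))) (range n) :=
    (range n).nodup_map_iff_injOn.mp (roots_T_real_nodup n)
  have hroots : (T ℝ n).roots =
      (range n).val.map fun k : ℕ ↦ cos ((2 * k + 1) * π / (2 * n)) := by
    rw [roots_T_real, image_val_of_injOn hinj]
  have hcard : Multiset.card (T ℝ n).roots = (T ℝ n).natDegree := by simp [hroots]
  conv_lhs => rw [← C_leadingCoeff_mul_prod_multiset_X_sub_C hcard]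
  simp [hroots, eval_multiset_prod, Finset.prod_eq_multiset_prod]

end Polynomial.Chebyshev

/-- The Chebyshev points on `[a, b]`, indexed from `0`: `chebyshevNode a b n k` is the paper's
`r_{k+1}`. -/
noncomputable def chebyshevNode (a b : ℝ) (n k : ℕ) : ℝ :=
  (b - a) / 2 * cos ((2 * k + 1) * π / (2 * n)) + (b + a) / 2

noncomputable def toUnitInterval (a b t : ℝ) : ℝ := (2 * t - (b + a)) / (b - a)

section ChebyshevNode

variable {a b : ℝ} {n : ℕ}

lemma le_chebyshevNode (hab : a ≤ b) (k : ℕ) : a ≤ chebyshevNode a b n k := by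
  have := neg_one_le_cos ((2 * k + 1) * π / (2 * n))
  unfold chebyshevNode
  nlinarith

lemma eval_T_real_toUnitInterval (hab : a < b) (t : ℝ) :
    (T ℝ n).eval (toUnitInterval a b t) =
      2 ^ (n - 1) * (2 / (b - a)) ^ n * ∏ k ∈ range n, (t - chebyshevNode a b n k) := by
  have hba : b - a ≠ 0 := by linarith
  have hpow : (2 / (b - a)) ^ n = ∏ _k ∈ range n, 2 / (b - a) := by
    rw [prod_const, card_range]
  rw [eval_T_real_eq_prod, mul_assoc, hpow, ← prod_mul_distrib]
  congr 2 with k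
  unfold toUnitInterval chebyshevNode
  field_simp
  ring

lemma abs_toUnitInterval_le_one (hab : a < b) {t : ℝ} (ht : t ∈ Set.Icc a b) :
    |toUnitInterval a b t| ≤ 1 := by
  have hba : 0 < b - a := by linarith
  rw [toUnitInterval, abs_div, abs_of_pos hba, div_le_one hba, abs_le]
  constructor <;> linarith [ht.1, ht.2]

lemma one_lt_abs_toUnitInterval_zero (ha : 0 < a) (hab : a < b) :
    1 < |toUnitInterval a b 0| := by
  have hba : 0 < b - a := by linarith
  rw [toUnitInterval, abs_div, abs_of_pos hba, one_lt_div hba, abs_of_neg (by linarith)]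
  linarith

lemma prod_one_sub_div_chebyshevNode (ha : 0 < a) (hab : a < b) (t : ℝ) :
    ∏ k ∈ range n, (1 - t / chebyshevNode a b n k) =
      (T ℝ n).eval (toUnitInterval a b t) / (T ℝ n).eval (toUnitInterval a b 0) := by
  have hnode : ∀ k, chebyshevNode a b n k ≠ 0 := fun k ↦
    (ha.trans_le (le_chebyshevNode hab.le k)).ne'
  have hK : (2 : ℝ) ^ (n - 1) * (2 / (b - a)) ^ n ≠ 0 := by
    have : b - a ≠ 0 := by linarith
    positivity
  rw [eval_T_real_toUnitInterval hab, eval_T_real_toUnitInterval hab, mul_div_mul_left _ _ hK,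
    ← prod_div_distrib]
  refine prod_congr rfl fun k _ ↦ ?_
  field_simp [hnode k]
  ring

lemma abs_prod_one_sub_div_chebyshevNode_le (ha : 0 < a) (hab : a < b) {t : ℝ}
    (ht : t ∈ Set.Icc a b) :
    |∏ k ∈ range n, (1 - t / chebyshevNode a b n k)| ≤
      1 / |(T ℝ n).eval (toUnitInterval a b 0)| := by
  rw [prod_one_sub_div_chebyshevNode ha hab, abs_div]
  gcongr
  exact abs_eval_T_real_le_one n (abs_toUnitInterval_le_one hab ht)

end ChebyshevNode

lemma prod_Icc_one_eq_prod_range {R : Type*} [CommMonoid R] (f : ℕ → R) (n : ℕ) :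
    ∏ k ∈ Icc 1 n, f k = ∏ k ∈ range n, f (k + 1) := by
  rw [← Ico_add_one_right_eq_Icc, prod_Ico_eq_prod_range, Nat.add_sub_cancel]
  simp only [add_comm 1]

lemma prod_range_mul_add_of_periodic {R : Type*} [CommMonoid R] {f : ℕ → R} {M : ℕ}
    (hf : Function.Periodic f M) (q s : ℕ) :
    ∏ k ∈ range (q * M + s), f k = (∏ k ∈ range M, f k) ^ q * ∏ k ∈ range s, f k := by
  have hshift : ∀ q n, ∏ k ∈ range n, f (q * M + k) = ∏ k ∈ range n, f k := fun q n ↦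
    prod_congr rfl fun k _ ↦ by simpa [add_comm] using hf.nat_mul q k
  rw [prod_range_add, hshift]
  congr 1
  induction q with
  | zero => simp
  | succ q ih => rw [add_one_mul, prod_range_add, ih, hshift, pow_succ]

lemma tendsto_prod_range_of_periodic {f : ℕ → ℝ} {M : ℕ} (hM : M ≠ 0)
    (hf : Function.Periodic f M) (hρ : |∏ k ∈ range M, f k| < 1) :
    Tendsto (fun T ↦ ∏ k ∈ range T, f k) atTop (nhds 0) := by
  set B := ∑ s ∈ range M, |∏ k ∈ range s, f k|
  have hbound : ∀ T, ‖∏ k ∈ range T, f k‖ ≤ |∏ k ∈ range M, f k| ^ (T / M) * B := by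
    intro T
    have hmod : T % M ∈ range M := mem_range.mpr (Nat.mod_lt _ (Nat.pos_of_ne_zero hM))
    conv_lhs => rw [← Nat.div_add_mod' T M]
    rw [prod_range_mul_add_of_periodic hf, Real.norm_eq_abs, abs_mul, abs_pow]
    gcongr
    exact single_le_sum (f := fun s ↦ |∏ k ∈ range s, f k|) (fun _ _ ↦ abs_nonneg _) hmod
  refine squeeze_zero_norm hbound ?_
  simpa using ((tendsto_pow_atTop_nhds_zero_of_lt_one (abs_nonneg _) hρ).comp
    (Nat.tendsto_div_const_atTop hM)).mul_const B

lemma sum_vecMulVec_self_eq_one {ι R : Type*} [Fintype ι] [DecidableEq ι] [CommRing R]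
    {v : ι → ι → R} (horth : ∀ i j, v i ⬝ᵥ v j = if i = j then 1 else 0) :
    ∑ i, vecMulVec (v i) (v i) = 1 := by
  have hrows : of v * (of v)ᵀ = 1 := by
    ext i j
    simp [mul_apply, one_apply, ← horth i j, dotProduct]
  have hcols : (of v)ᵀ * of v = 1 := mul_eq_one_comm.mp hrows
  ext a b
  simpa [mul_apply, vecMulVec_apply, Matrix.sum_apply] using congrFun (congrFun hcols a) b

lemma consProd_eq_sum {N : ℕ} {L : Matrix (Fin N) (Fin N) ℝ} {lam : Fin N → ℝ}
    {v : Fin N → Fin N → ℝ} (heig : ∀ i, L *ᵥ v i = lam i • v i)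
    (horth : ∀ i j, v i ⬝ᵥ v j = if i = j then 1 else 0) (ε : ℕ → ℝ) (T : ℕ) :
    consProd L ε T = ∑ i, (∏ k ∈ range T, (1 - ε k * lam i)) • vecMulVec (v i) (v i) := by
  induction T with
  | zero => simp [consProd, sum_vecMulVec_self_eq_one horth]
  | succ T ih =>
    rw [consProd, ih, mul_sum]
    refine sum_congr rfl fun i _ ↦ ?_
    rw [mul_smul_comm, sub_mul, one_mul, smul_mul_assoc, mul_vecMulVec, heig, smul_vecMulVec,
      prod_range_succ]
    module

lemma tendsto_consProd {N : ℕ} (hN : 0 < N) {L : Matrix (Fin N) (Fin N) ℝ} {lam : Fin N → ℝ}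
    {v : Fin N → Fin N → ℝ} (heig : ∀ i, L *ᵥ v i = lam i • v i)
    (horth : ∀ i j, v i ⬝ᵥ v j = if i = j then 1 else 0)
    (hlam0 : ∀ i : Fin N, (i : ℕ) = 0 → lam i = 0)
    (hv0 : ∀ i : Fin N, (i : ℕ) = 0 → v i = fun _ ↦ (√N)⁻¹) {ε : ℕ → ℝ}
    (hdecay : ∀ i : Fin N, (i : ℕ) ≠ 0 →
      Tendsto (fun T ↦ ∏ k ∈ range T, (1 - ε k * lam i)) atTop (nhds 0)) :
    Tendsto (consProd L ε) atTop (nhds ((N : ℝ)⁻¹ • vecMulVec (fun _ ↦ 1) (fun _ ↦ 1))) := by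
  have hlimit : (N : ℝ)⁻¹ • vecMulVec (fun _ ↦ 1) (fun _ ↦ 1) =
      ∑ i : Fin N, if (i : ℕ) = 0 then vecMulVec (v i) (v i) else 0 := by
    let i₀ : Fin N := ⟨0, hN⟩
    rw [Fintype.sum_eq_single i₀ fun i hi ↦ if_neg fun h ↦ hi (Fin.ext h), if_pos rfl, hv0 i₀ rfl]
    ext a b
    simp [vecMulVec_apply, ← mul_inv, Nat.cast_nonneg]
  rw [funext (consProd_eq_sum heig horth ε), hlimit]
  refine tendsto_finsetSum _ fun i _ ↦ ?_
  split_ifs with hi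
  · simp [hlam0 i hi]
  · simpa using (hdecay i hi).smul_const (vecMulVec (v i) (v i))

theorem stmt_17_general (α β : ℝ) (hα : 0 < α) (hαβ : α < β) (M : ℕ) (hM : 1 ≤ M)
    -- the Chebyshev interpolation points r_1, …, r_M on [α, β]
    (r : ℕ → ℝ)
    (hr : ∀ i, r i = (β - α) / 2 * Real.cos ((2 * (i : ℝ) - 1) * Real.pi / (2 * M)) +
      (β + α) / 2)
    (N : ℕ) (hN : 2 ≤ N)
    (L : Matrix (Fin N) (Fin N) ℝ)
    (lam : Fin N → ℝ) (v : Fin N → Fin N → ℝ)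
    (hlam0 : ∀ i : Fin N, (i : ℕ) = 0 → lam i = 0)
    (heig : ∀ i, L.mulVec (v i) = lam i • v i)
    (horth : ∀ i j, v i ⬝ᵥ v j = if i = j then 1 else 0)
    (hv0 : ∀ i : Fin N, (i : ℕ) = 0 → v i = fun _ => (Real.sqrt N)⁻¹)
    (hne : (Finset.univ.filter (fun i : Fin N => (i : ℕ) ≠ 0)).Nonempty)
    -- all nonzero eigenvalues lie in [α, β]
    (hspec : ∀ i : Fin N, (i : ℕ) ≠ 0 → lam i ∈ Set.Icc α β)
    -- the M-periodic gain sequence ε*(k + jM) = 1/r_{k+1}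
    (ε : ℕ → ℝ) (hε : ∀ j k, k < M → ε (k + j * M) = (r (k + 1))⁻¹) :
    Tendsto (consProd L ε) atTop
      (nhds ((N : ℝ)⁻¹ • vecMulVec (fun _ => 1) (fun _ => 1))) ∧
    (Finset.univ.filter (fun i : Fin N => (i : ℕ) ≠ 0)).sup' hne
        (fun i => |∏ k ∈ Finset.Icc 1 M, (1 - lam i / r k)|) ≤
      1 / |(Polynomial.Chebyshev.T ℝ (M : ℤ)).eval (-(β + α) / (β - α))| ∧
    1 / |(Polynomial.Chebyshev.T ℝ (M : ℤ)).eval (-(β + α) / (β - α))| < 1 := by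
  have hM0 : M ≠ 0 := by omega
  have hx₀ : toUnitInterval α β 0 = -(β + α) / (β - α) := by simp [toUnitInterval]
  have hγ : 1 < |(T ℝ (M : ℤ)).eval (-(β + α) / (β - α))| :=
    hx₀ ▸ one_lt_abs_eval_T_real (by exact_mod_cast hM0) (one_lt_abs_toUnitInterval_zero hα hαβ)
  have hγ_lt_one : 1 / |(T ℝ (M : ℤ)).eval (-(β + α) / (β - α))| < 1 :=
    (div_lt_one (by linarith)).mpr hγ
  have hrate : ∀ i : Fin N, (i : ℕ) ≠ 0 →
      |∏ k ∈ Icc 1 M, (1 - lam i / r k)| ≤ 1 / |(T ℝ (M : ℤ)).eval (-(β + α) / (β - α))| := by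
    intro i hi
    rw [prod_Icc_one_eq_prod_range, ← hx₀]
    convert abs_prod_one_sub_div_chebyshevNode_le hα hαβ (hspec i hi) using 4 with k
    rw [hr, chebyshevNode]
    push_cast
    ring_nf
  refine ⟨?_, sup'_le _ _ fun i hi ↦ hrate i (mem_filter.mp hi).2, hγ_lt_one⟩
  have hε_mod : ∀ k, ε k = (r (k % M + 1))⁻¹ := fun k ↦ by
    simpa [Nat.mod_add_div'] using hε (k / M) (k % M) (Nat.mod_lt _ (by omega))
  have hε_periodic : Function.Periodic ε M := fun k ↦ by rw [hε_mod, hε_mod, Nat.add_mod_right]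
  refine tendsto_consProd (by omega) heig horth hlam0 hv0 fun i hi ↦
    tendsto_prod_range_of_periodic hM0 (fun k ↦ by simp only [hε_periodic k]) ?_
  have hperiod : ∏ k ∈ range M, (1 - ε k * lam i) = ∏ k ∈ Icc 1 M, (1 - lam i / r k) := by
    rw [prod_Icc_one_eq_prod_range]
    refine prod_congr rfl fun k hk ↦ ?_
    rw [hε_mod, Nat.mod_eq_of_lt (mem_range.mp hk), div_eq_inv_mul]
  exact hperiod ▸ (hrate i hi).trans_lt hγ_lt_one

theorem stmt_17 (α β : ℝ) (hα : 0 < α) (hαβ : α < β) (M : ℕ) (hM : 1 ≤ M)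
    -- the Chebyshev interpolation points r_1, …, r_M on [α, β]
    (r : ℕ → ℝ)
    (hr : ∀ i, r i = (β - α) / 2 * Real.cos ((2 * (i : ℝ) - 1) * Real.pi / (2 * M)) +
      (β + α) / 2)
    (N : ℕ) (hN : 2 ≤ N)
    (L : Matrix (Fin N) (Fin N) ℝ) (hsymm : L.IsSymm) (hpsd : L.PosSemidef)
    (lam : Fin N → ℝ) (v : Fin N → Fin N → ℝ)
    (hlam_mono : Monotone lam)
    (hlam0 : ∀ i : Fin N, (i : ℕ) = 0 → lam i = 0)
    (hlam_pos : ∀ i : Fin N, (i : ℕ) ≠ 0 → 0 < lam i)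
    (heig : ∀ i, L.mulVec (v i) = lam i • v i)
    (horth : ∀ i j, v i ⬝ᵥ v j = if i = j then 1 else 0)
    (hv0 : ∀ i : Fin N, (i : ℕ) = 0 → v i = fun _ => (Real.sqrt N)⁻¹)
    (hne : (Finset.univ.filter (fun i : Fin N => (i : ℕ) ≠ 0)).Nonempty)
    -- all nonzero eigenvalues lie in [α, β]
    (hspec : ∀ i : Fin N, (i : ℕ) ≠ 0 → lam i ∈ Set.Icc α β)
    -- the M-periodic gain sequence ε*(k + jM) = 1/r_{k+1}
    (ε : ℕ → ℝ) (hε : ∀ j k, k < M → ε (k + j * M) = (r (k + 1))⁻¹) :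
    Tendsto (consProd L ε) atTop
      (nhds ((N : ℝ)⁻¹ • vecMulVec (fun _ => 1) (fun _ => 1))) ∧
    (Finset.univ.filter (fun i : Fin N => (i : ℕ) ≠ 0)).sup' hne
        (fun i => |∏ k ∈ Finset.Icc 1 M, (1 - lam i / r k)|) ≤
      1 / |(Polynomial.Chebyshev.T ℝ (M : ℤ)).eval (-(β + α) / (β - α))| ∧
    1 / |(Polynomial.Chebyshev.T ℝ (M : ℤ)).eval (-(β + α) / (β - α))| < 1 :=
  stmt_17_general α β hα hαβ M hM r hr N hN L lam v hlam0 heig horth hv0 hne hspec ε hε
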